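/- Let G be a nontrivial finite 2-group with faithful irreducible complex characters χ and ψ, and let λ and μ be the unique linear characters of Z(G) such that the restriction of χ (respectively ψ) to Z(G) equals χ(1)·λ (respectively ψ(1)·μ). Then the linear character λμ of Z(G) is not faithful. -/

import Mathlib

open scoped ComplexOrder

/-- `χ` is the character of some finite-dimensional complex representation of `G`. -/
def IsChar (G : Type) [Group G] (χ : G → ℂ) : Prop :=
  ∃ V : FDRep ℂ G, V.character = χ

/-- `χ` is an irreducible complex character of `G`, i.e. the character of some
simple finite-dimensional complex representation of `G`. -/
def IsIrrChar (G : Type) [Group G] (χ : G → ℂ) : Prop :=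
  ∃ V : FDRep ℂ G, CategoryTheory.Simple V ∧ V.character = χ

/-- The standard inner product of complex class functions on a finite group. -/
noncomputable def charInner (G : Type) [Group G] [Fintype G] (f h : G → ℂ) : ℂ :=
  (Fintype.card G : ℂ)⁻¹ * ∑ g : G, f g * starRingEnd ℂ (h g)

/-- `η(χ,ψ)`: the number of distinct irreducible characters occurring as
constituents of the product character `χψ`. -/
noncomputable def eta (G : Type) [Group G] [Fintype G] (χ ψ : G → ℂ) : ℕ :=
  {θ : G → ℂ | IsIrrChar G θ ∧ 0 < charInner G (fun g => χ g * ψ g) θ}.ncard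

/-- A character is faithful if its kernel `{g | χ g = χ 1}` is trivial. -/
def IsFaithfulChar (G : Type) [Group G] (χ : G → ℂ) : Prop :=
  ∀ g : G, χ g = χ 1 → g = 1

/-- The center `Z(χ) = {g | |χ(g)| = χ(1)}` of a character. -/
def charCenter (G : Type) [Group G] (χ : G → ℂ) : Set G :=
  {g | (‖χ g‖ : ℂ) = χ 1}

/-!
A nontrivial finite `p`-group has a central element `z` of order `p`. For `p = 2` the central
character `ν` of any faithful character takes the value `-1` at `z`: it is a square root of `1`,
and `ν z = 1` would put `z` in the kernel. Hence `(λμ)(z) = (-1)(-1) = 1` with `z ≠ 1`.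
-/

theorem IsPGroup.exists_orderOf_eq_prime_center {p : ℕ} [Fact p.Prime] {G : Type*} [Group G]
    [Finite G] [Nontrivial G] (hG : IsPGroup p G) :
    ∃ z : Subgroup.center G, orderOf z = p := by
  have := hG.center_nontrivial
  have hdvd : p ∣ Nat.card (Subgroup.center G) :=
    (hG.to_subgroup _).card_eq_or_dvd.resolve_left Finite.one_lt_card.ne'
  exact exists_prime_orderOf_dvd_card' p hdvd

theorem IsFaithfulChar.apply_ne_one {G : Type} [Group G] {θ : G → ℂ}
    (hθ : IsFaithfulChar G θ) {H : Subgroup G} {ν : H →* ℂ} (hν : ∀ w : H, θ w = θ 1 * ν w)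
    {z : H} (hz : z ≠ 1) : ν z ≠ 1 := by
  intro hνz
  refine hz (Subtype.ext (hθ z ?_))
  rw [hν z, hνz, mul_one]

theorem IsFaithfulChar.apply_eq_neg_one_of_orderOf_eq_two {G : Type} [Group G] {θ : G → ℂ}
    (hθ : IsFaithfulChar G θ) {H : Subgroup G} {ν : H →* ℂ} (hν : ∀ w : H, θ w = θ 1 * ν w)
    {z : H} (hz : orderOf z = 2) : ν z = -1 := by
  have hsq : ν z * ν z = 1 := by
    rw [← map_mul, ← pow_two, ← hz, pow_orderOf_eq_one, map_one]
  have hz1 : z ≠ 1 := fun h => by simp [h] at hz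
  exact (mul_self_eq_one_iff.mp hsq).resolve_left (hθ.apply_ne_one hν hz1)

theorem stmt10_general (G : Type) [Group G] [Fintype G] [Nontrivial G]
    (hG : IsPGroup 2 G) (χ ψ : G → ℂ)
    (hfχ : IsFaithfulChar G χ) (hfψ : IsFaithfulChar G ψ)
    (lam mu : ↥(Subgroup.center G) →* ℂ)
    (hlam : ∀ z : ↥(Subgroup.center G), χ ↑z = χ 1 * lam z)
    (hmu : ∀ z : ↥(Subgroup.center G), ψ ↑z = ψ 1 * mu z) :
    ¬ (∀ z : ↥(Subgroup.center G), lam z * mu z = 1 → z = 1) := by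
  intro hfaithful
  obtain ⟨z, hz⟩ := hG.exists_orderOf_eq_prime_center
  have hlam_z := hfχ.apply_eq_neg_one_of_orderOf_eq_two hlam hz
  have hmu_z := hfψ.apply_eq_neg_one_of_orderOf_eq_two hmu hz
  have hz1 : z = 1 := hfaithful z (by rw [hlam_z, hmu_z]; norm_num)
  simp [hz1] at hz

/-- For a nontrivial finite 2-group with faithful irreducible χ, ψ, the product λμ
of the central characters of χ and ψ is not faithful. -/
theorem stmt10 (G : Type) [Group G] [Fintype G] [Nontrivial G]
    (hG : IsPGroup 2 G) (χ ψ : G → ℂ)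
    (hχ : IsIrrChar G χ) (hψ : IsIrrChar G ψ)
    (hfχ : IsFaithfulChar G χ) (hfψ : IsFaithfulChar G ψ)
    (lam mu : ↥(Subgroup.center G) →* ℂ)
    (hlam : ∀ z : ↥(Subgroup.center G), χ ↑z = χ 1 * lam z)
    (hmu : ∀ z : ↥(Subgroup.center G), ψ ↑z = ψ 1 * mu z) :
    ¬ (∀ z : ↥(Subgroup.center G), lam z * mu z = 1 → z = 1) :=
  stmt10_general G hG χ ψ hfχ hfψ lam mu hlam hmu
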